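/- arXiv:1401.1657 — 2 statements merged into one kernel-verified Lean document; each statement's English description precedes it below -/
import Mathlib

section
/- For a, b ∈ 𝔻 the map ψ(x₁,x₂,x₃) = ((x₁ − a − b̄x₃ + ab̄x₂)/(1 − āx₁ − b̄x₂ + āb̄x₃), (x₂ − b − āx₃ + āb x₁)/(1 − āx₁ − b̄x₂ + āb̄x₃), (x₃ − ax₂ − bx₁ + ab)/(1 − āx₁ − b̄x₂ + āb̄x₃)) is a holomorphic automorphism of the tetrablock 𝔼. -/
open Complex Metric Set

noncomputable section

/-- The open unit disc in `ℂ`. -/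
def 𝔻 : Set ℂ := Metric.ball 0 1

/-- `B` is a Blaschke product of degree `m` on the unit disc: a unimodular constant
times a product of `m` Möbius factors. -/
def IsBlaschke (m : ℕ) (B : ℂ → ℂ) : Prop :=
  ∃ (ω : ℂ) (a : Fin m → ℂ), ‖ω‖ = 1 ∧ (∀ j, a j ∈ 𝔻) ∧
    ∀ z ∈ 𝔻, B z = ω * ∏ j, (a j - z) / (1 - (starRingEnd ℂ) (a j) * z)

variable {E : Type*} [NormedAddCommGroup E] [NormedSpace ℂ E]

/-- The interpolation data `lam j ↦ f (lam j)` is extremally solvable (through `f`):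
no map holomorphic on a neighbourhood of the closed unit disc with values in `D`
interpolates `f` at the points `lam j`. -/
def ExtSolv (D : Set E) {m : ℕ} (lam : Fin m → ℂ) (f : ℂ → E) : Prop :=
  ¬ ∃ (U : Set ℂ) (g : ℂ → E), IsOpen U ∧ Metric.closedBall (0 : ℂ) 1 ⊆ U ∧
      DifferentiableOn ℂ g U ∧ (∀ z ∈ U, g z ∈ D) ∧ ∀ j, g (lam j) = f (lam j)

/-- `f : 𝔻 → D` is a weak `m`-extremal with respect to the distinct points `lam`. -/
def IsWeakExtremal (D : Set E) {m : ℕ} (lam : Fin m → ℂ) (f : ℂ → E) : Prop :=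
  DifferentiableOn ℂ f 𝔻 ∧ (∀ z ∈ 𝔻, f z ∈ D) ∧ ExtSolv D lam f

/-- `f : 𝔻 → D` is `m`-extremal: for all choices of `m` distinct points of `𝔻` the
corresponding interpolation data is extremally solvable. -/
def IsMExtremal (D : Set E) (m : ℕ) (f : ℂ → E) : Prop :=
  DifferentiableOn ℂ f 𝔻 ∧ (∀ z ∈ 𝔻, f z ∈ D) ∧
    ∀ lam : Fin m → ℂ, Function.Injective lam → (∀ j, lam j ∈ 𝔻) → ExtSolv D lam f

/-- The Minkowski functional of a set `D`. -/
def mink (D : Set E) (z : E) : ℝ := sInf {t : ℝ | 0 < t ∧ ((t : ℂ))⁻¹ • z ∈ D}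

/-- `φ` is a holomorphic automorphism of `D`. -/
def IsAutomorphismOf (D : Set E) (φ : E → E) : Prop :=
  DifferentiableOn ℂ φ D ∧ Set.MapsTo φ D D ∧
    ∃ ψ : E → E, DifferentiableOn ℂ ψ D ∧ Set.MapsTo ψ D D ∧
      (∀ z ∈ D, ψ (φ z) = z) ∧ (∀ z ∈ D, φ (ψ z) = z)

/-- The group of holomorphic automorphisms of `D` acts transitively. -/
def Homogeneous (D : Set E) : Prop :=
  ∀ z ∈ D, ∀ w ∈ D, ∃ φ : E → E, IsAutomorphismOf D φ ∧ φ z = w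

/-- `f` is an `m`-complex geodesic of `D`: there is `F ∈ 𝒪(D, 𝔻)` such that `F ∘ f` is a
non-constant Blaschke product of degree at most `m - 1`. -/
def IsComplexGeodesicOfOrder (D : Set E) (m : ℕ) (f : ℂ → E) : Prop :=
  DifferentiableOn ℂ f 𝔻 ∧ (∀ z ∈ 𝔻, f z ∈ D) ∧
    ∃ F : E → ℂ, DifferentiableOn ℂ F D ∧ (∀ z ∈ D, F z ∈ 𝔻) ∧
      ∃ k : ℕ, 1 ≤ k ∧ k ≤ m - 1 ∧ ∃ B : ℂ → ℂ, IsBlaschke k B ∧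
        ∀ z ∈ 𝔻, F (f z) = B z

/-- The sub-mean-value property on circles, for a real function on a subset of `ℂ`. -/
def SubmeanOn (u : ℂ → ℝ) (S : Set ℂ) : Prop :=
  ∀ (c : ℂ) (r : ℝ), 0 < r → Metric.closedBall c r ⊆ S →
    u c ≤ (2 * Real.pi)⁻¹ * ∫ θ in (0:ℝ)..(2 * Real.pi), u (c + r * Complex.exp (θ * Complex.I))

/-- `u` is plurisubharmonic on `D`: upper semicontinuous and submean on every complex line. -/
def PlurisubharmonicOn (u : E → ℝ) (D : Set E) : Prop :=
  UpperSemicontinuousOn u D ∧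
    ∀ (z v : E), SubmeanOn (fun w : ℂ => u (z + w • v)) {w : ℂ | z + w • v ∈ D}

/-- Hartogs pseudoconvexity: `- log dist(·, ∂D)` is plurisubharmonic on `D`. -/
def IsPseudoconvex (D : Set E) : Prop :=
  PlurisubharmonicOn (fun z => - Real.log (Metric.infDist z Dᶜ)) D


/-- The tetrablock. -/
def TetE : Set (Fin 3 → ℂ) :=
  {x | ‖x 0 - (starRingEnd ℂ) (x 1) * x 2‖ + ‖x 1 - (starRingEnd ℂ) (x 0) * x 2‖ + ‖x 2‖ ^ 2 < 1}

/-- The candidate automorphism of the tetrablock induced by `Φ_{diag(a,b)}`. -/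
def tetraAut (a b : ℂ) : (Fin 3 → ℂ) → (Fin 3 → ℂ) := fun x =>
  ![(x 0 - a - (starRingEnd ℂ) b * x 2 + a * (starRingEnd ℂ) b * x 1) /
      (1 - (starRingEnd ℂ) a * x 0 - (starRingEnd ℂ) b * x 1 +
        (starRingEnd ℂ) a * (starRingEnd ℂ) b * x 2),
    (x 1 - b - (starRingEnd ℂ) a * x 2 + (starRingEnd ℂ) a * b * x 0) /
      (1 - (starRingEnd ℂ) a * x 0 - (starRingEnd ℂ) b * x 1 +
        (starRingEnd ℂ) a * (starRingEnd ℂ) b * x 2),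
    (x 2 - a * x 1 - b * x 0 + a * b) /
      (1 - (starRingEnd ℂ) a * x 0 - (starRingEnd ℂ) b * x 1 +
        (starRingEnd ℂ) a * (starRingEnd ℂ) b * x 2)]

/-!
Put `u = x₀ - x̄₁x₂`, `v = x₁ - x̄₀x₂`, `σ = 1 - |x₂|²`, `δ = |x₀|² - |x₁|²`, so that `x ∈ 𝔼`
means `|u| + |v| < σ`, and `|u|² - |v|² = δσ`. Writing `ψ = (P, Q, R) / D`, the point `ψ x` lies
in `𝔼` iff `|P D̄ - Q̄ R| + |Q D̄ - P̄ R| + |R|² < |D|²`. Here the two cross terms are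
`(1 - |b|²)(u + a²ū - a(σ + δ))` and `(1 - |a|²)(v + b²v̄ - b(σ - δ))`, and `|D|² - |R|²` is a
real expression in `Re(ā u)`, `Re(b̄ v)`, `σ`, `δ`. Bounding each cross term together with its
`Re` term by a rotation argument leaves a polynomial inequality in `|a|, |b|, |u|, |v|, σ, δ`,
which holds because `σ` times the gap factors into positive terms. The inverse of `ψ_{a,b}` is
`ψ_{-a,-b}`.
-/

open ComplexConjugate

namespace Tetrablock

def num₀ (a b : ℂ) (x : Fin 3 → ℂ) : ℂ := x 0 - a - conj b * x 2 + a * conj b * x 1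
def num₁ (a b : ℂ) (x : Fin 3 → ℂ) : ℂ := x 1 - b - conj a * x 2 + conj a * b * x 0
def num₂ (a b : ℂ) (x : Fin 3 → ℂ) : ℂ := x 2 - a * x 1 - b * x 0 + a * b
def den (a b : ℂ) (x : Fin 3 → ℂ) : ℂ := 1 - conj a * x 0 - conj b * x 1 + conj a * conj b * x 2

lemma tetraAut_eq (a b : ℂ) (x : Fin 3 → ℂ) :
    tetraAut a b x = ![num₀ a b x / den a b x, num₁ a b x / den a b x, num₂ a b x / den a b x] :=
  rfl

lemma norm_sq_sub_norm_sq (z w c : ℂ) :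
    ‖z - conj w * c‖ ^ 2 - ‖w - conj z * c‖ ^ 2 = (‖z‖ ^ 2 - ‖w‖ ^ 2) * (1 - ‖c‖ ^ 2) := by
  apply Complex.ofReal_injective
  push_cast
  simp only [← Complex.mul_conj', map_sub, map_mul, Complex.conj_conj]
  ring

lemma num₀_mul_conj_den_sub (a b : ℂ) (x : Fin 3 → ℂ) :
    num₀ a b x * conj (den a b x) - conj (num₁ a b x) * num₂ a b x =
      ((1 - ‖b‖ ^ 2 : ℝ) : ℂ) * (x 0 - conj (x 1) * x 2 + a ^ 2 * conj (x 0 - conj (x 1) * x 2)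
        - a * ((1 - ‖x 2‖ ^ 2 + (‖x 0‖ ^ 2 - ‖x 1‖ ^ 2) : ℝ) : ℂ)) := by
  push_cast
  simp only [← Complex.mul_conj', num₀, num₁, num₂, den, map_sub, map_add, map_mul, map_one,
    Complex.conj_conj]
  ring

lemma num₁_mul_conj_den_sub (a b : ℂ) (x : Fin 3 → ℂ) :
    num₁ a b x * conj (den a b x) - conj (num₀ a b x) * num₂ a b x =
      ((1 - ‖a‖ ^ 2 : ℝ) : ℂ) * (x 1 - conj (x 0) * x 2 + b ^ 2 * conj (x 1 - conj (x 0) * x 2)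
        - b * ((1 - ‖x 2‖ ^ 2 - (‖x 0‖ ^ 2 - ‖x 1‖ ^ 2) : ℝ) : ℂ)) := by
  push_cast
  simp only [← Complex.mul_conj', num₀, num₁, num₂, den, map_sub, map_add, map_mul, map_one,
    Complex.conj_conj]
  ring

lemma norm_den_sq_sub (a b : ℂ) (x : Fin 3 → ℂ) :
    ‖den a b x‖ ^ 2 - ‖num₂ a b x‖ ^ 2 =
      (1 - ‖a‖ ^ 2 * ‖b‖ ^ 2) * (1 - ‖x 2‖ ^ 2)
        - (1 - ‖b‖ ^ 2) * (2 * (conj a * (x 0 - conj (x 1) * x 2)).re)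
        - (1 - ‖a‖ ^ 2) * (2 * (conj b * (x 1 - conj (x 0) * x 2)).re)
        + (‖a‖ ^ 2 - ‖b‖ ^ 2) * (‖x 0‖ ^ 2 - ‖x 1‖ ^ 2) := by
  apply Complex.ofReal_injective
  push_cast
  simp only [← Complex.mul_conj', Complex.re_eq_add_conj, num₂, den, map_sub, map_add, map_mul,
    map_one, Complex.conj_conj]
  ring

lemma differentiableAt_tetraAut {a b : ℂ} {x : Fin 3 → ℂ} (hx : den a b x ≠ 0) :
    DifferentiableAt ℂ (tetraAut a b) x := by
  refine differentiableAt_pi.2 fun i => ?_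
  fin_cases i <;>
    simp only [tetraAut, Fin.isValue, Fin.zero_eta, Fin.mk_one, Fin.reduceFinMk,
      Matrix.cons_val_zero, Matrix.cons_val_one, Matrix.cons_val] <;>
    fun_prop (disch := exact hx)

lemma mem_tetE_div_iff {p q r d : ℂ} (hd : d ≠ 0) :
    ![p / d, q / d, r / d] ∈ TetE ↔
      ‖p * conj d - conj q * r‖ + ‖q * conj d - conj p * r‖ + ‖r‖ ^ 2 < ‖d‖ ^ 2 := by
  have hd' : conj d ≠ 0 := (map_ne_zero _).2 hd
  have e₀ : p / d - conj (q / d) * (r / d) = (p * conj d - conj q * r) / (d * conj d) := by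
    rw [map_div₀]; field_simp
  have e₁ : q / d - conj (p / d) * (r / d) = (q * conj d - conj p * r) / (d * conj d) := by
    rw [map_div₀]; field_simp
  change ‖p / d - conj (q / d) * (r / d)‖ + ‖q / d - conj (p / d) * (r / d)‖ + ‖r / d‖ ^ 2 < 1 ↔ _
  rw [e₀, e₁, norm_div, norm_div, norm_mul, Complex.norm_conj, norm_div, div_pow, ← sq,
    ← add_div, ← add_div, div_lt_one (by positivity)]

lemma re_mul_add_two_re_le {ζ : ℂ} (hζ : ‖ζ‖ = 1) (a u : ℂ) {τ : ℝ} (hτ : 2 * ‖u‖ ≤ τ) :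
    (ζ * (u + a ^ 2 * conj u - a * τ)).re + 2 * (conj a * u).re ≤
      (1 + ‖a‖ ^ 2) * ‖u‖ + ‖a‖ * (τ - 2 * ‖u‖) := by
  have hζζ : ζ * conj ζ = 1 := by rw [Complex.mul_conj', hζ]; norm_num
  -- up to the purely imaginary last term, `ζ X + 2 ā u` is `w u - a ζ τ` with `w = ζ (1 + ā ζ̄)²`,
  -- and `‖w‖ = ‖1 + a ζ‖² = 1 + ‖a‖² + 2 Re (a ζ)`
  have hsplit : ζ * (u + a ^ 2 * conj u - a * τ) + 2 * (conj a * u) =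
      ζ * (1 + conj a * conj ζ) ^ 2 * u - a * ζ * τ
        + (a ^ 2 * conj u * ζ - conj (a ^ 2 * conj u * ζ)) := by
    simp only [map_mul, map_pow, Complex.conj_conj]
    linear_combination (-(2 * conj a) - conj a ^ 2 * conj ζ) * u * hζζ
  have hnorm : ‖ζ * (1 + conj a * conj ζ) ^ 2‖ = 1 + ‖a‖ ^ 2 + 2 * (a * ζ).re := by
    rw [norm_mul, hζ, one_mul, norm_pow, Complex.sq_norm, Complex.normSq_add,
      Complex.normSq_one, Complex.normSq_mul, Complex.normSq_conj, Complex.normSq_conj,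
      Complex.normSq_eq_norm_sq, Complex.normSq_eq_norm_sq, hζ]
    simp only [map_mul, Complex.conj_conj, one_mul]
    ring
  have hre : (ζ * (u + a ^ 2 * conj u - a * τ)).re + 2 * (conj a * u).re =
      (ζ * (1 + conj a * conj ζ) ^ 2 * u).re - (a * ζ).re * τ := by
    have h := congrArg Complex.re hsplit
    rw [Complex.sub_conj] at h
    simpa [Complex.mul_re] using h
  have hu : (ζ * (1 + conj a * conj ζ) ^ 2 * u).re ≤ (1 + ‖a‖ ^ 2 + 2 * (a * ζ).re) * ‖u‖ := by
    rw [← hnorm, ← norm_mul]; exact Complex.re_le_norm _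
  have haζ : -‖a‖ ≤ (a * ζ).re := by
    have := Complex.abs_re_le_norm (a * ζ)
    rw [norm_mul, hζ, mul_one] at this
    exact (abs_le.mp this).1
  nlinarith [mul_le_mul_of_nonneg_right haζ (sub_nonneg.mpr hτ)]

lemma norm_add_sq_mul_conj_sub_add_two_re_le (a u : ℂ) {τ : ℝ} (hτ : 2 * ‖u‖ ≤ τ) :
    ‖u + a ^ 2 * conj u - a * τ‖ + 2 * (conj a * u).re ≤
      (1 + ‖a‖ ^ 2) * ‖u‖ + ‖a‖ * (τ - 2 * ‖u‖) := by
  set X := u + a ^ 2 * conj u - a * τ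
  have hζ : ‖Complex.exp (-(X.arg : ℂ) * Complex.I)‖ = 1 := by
    rw [← Complex.ofReal_neg]; exact Complex.norm_exp_ofReal_mul_I _
  have hX : Complex.exp (-(X.arg : ℂ) * Complex.I) * X = ‖X‖ := by
    calc _ = Complex.exp (-(X.arg : ℂ) * Complex.I) * (‖X‖ * Complex.exp (X.arg * Complex.I)) := by
          rw [Complex.norm_mul_exp_arg_mul_I]
      _ = ‖X‖ := by
          rw [mul_left_comm, ← Complex.exp_add, neg_mul, neg_add_cancel, Complex.exp_zero, mul_one]
  have := re_mul_add_two_re_le hζ a u hτ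
  rwa [hX, Complex.ofReal_re] at this

lemma two_mul_le_add_of_mul_eq_sq_sub_sq {U V σ δ : ℝ} (hU : 0 ≤ U) (hV : 0 ≤ V)
    (h : U + V < σ) (hδ : δ * σ = U ^ 2 - V ^ 2) : 2 * U ≤ σ + δ := by
  have hσ : 0 < σ := by linarith
  -- `σ (σ + δ - 2U) = (σ - U - V)(σ - U + V)`
  nlinarith [mul_nonneg (by linarith : (0:ℝ) ≤ σ - U - V) (by linarith : (0:ℝ) ≤ σ - U + V)]

lemma add_lt_of_mul_eq_sq_sub_sq {s t U V σ δ : ℝ} (hs0 : 0 ≤ s) (hs : s < 1) (ht0 : 0 ≤ t)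
    (ht : t < 1) (hU : 0 ≤ U) (hV : 0 ≤ V) (h : U + V < σ) (hδ : δ * σ = U ^ 2 - V ^ 2) :
    (1 - t ^ 2) * ((1 + s ^ 2) * U + s * (σ + δ - 2 * U)) +
      (1 - s ^ 2) * ((1 + t ^ 2) * V + t * (σ - δ - 2 * V)) <
    (1 - s ^ 2 * t ^ 2) * σ + (s ^ 2 - t ^ 2) * δ := by
  have hσ : 0 < σ := by linarith
  have h₁ : 0 < (1 - s) * (1 - t) := by nlinarith
  have h₂ : 0 < σ - U - V := by linarith
  have h₃ : 0 < (1 - s * t) * σ + (s - t) * (U - V) := by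
    nlinarith [mul_pos (by nlinarith : (0:ℝ) < 1 - s * t) h₂,
      mul_nonneg (mul_nonneg (by linarith : (0:ℝ) ≤ 1 + s) (by linarith : (0:ℝ) ≤ 1 - t)) hU,
      mul_nonneg (mul_nonneg (by linarith : (0:ℝ) ≤ 1 - s) (by linarith : (0:ℝ) ≤ 1 + t)) hV]
  have key : σ * ((1 - s ^ 2 * t ^ 2) * σ + (s ^ 2 - t ^ 2) * δ
      - ((1 - t ^ 2) * ((1 + s ^ 2) * U + s * (σ + δ - 2 * U)) +
        (1 - s ^ 2) * ((1 + t ^ 2) * V + t * (σ - δ - 2 * V)))) =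
      (1 - s) * (1 - t) * (σ - U - V) * ((1 - s * t) * σ + (s - t) * (U - V)) := by
    linear_combination (s ^ 2 - t ^ 2 - s * (1 - t ^ 2) + t * (1 - s ^ 2)) * hδ
  nlinarith [mul_pos (mul_pos h₁ h₂) h₃]

theorem tetE_inequality_num_den {a b : ℂ} (ha : ‖a‖ < 1) (hb : ‖b‖ < 1) {x : Fin 3 → ℂ}
    (hx : x ∈ TetE) :
    ‖num₀ a b x * conj (den a b x) - conj (num₁ a b x) * num₂ a b x‖ +
      ‖num₁ a b x * conj (den a b x) - conj (num₀ a b x) * num₂ a b x‖ +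
      ‖num₂ a b x‖ ^ 2 < ‖den a b x‖ ^ 2 := by
  change ‖x 0 - conj (x 1) * x 2‖ + ‖x 1 - conj (x 0) * x 2‖ + ‖x 2‖ ^ 2 < 1 at hx
  have hb2 : 0 ≤ 1 - ‖b‖ ^ 2 := by nlinarith [norm_nonneg b]
  have ha2 : 0 ≤ 1 - ‖a‖ ^ 2 := by nlinarith [norm_nonneg a]
  rw [num₀_mul_conj_den_sub, num₁_mul_conj_den_sub, norm_mul, norm_mul, Complex.norm_real,
    Complex.norm_real, Real.norm_of_nonneg hb2, Real.norm_of_nonneg ha2]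
  have hden := norm_den_sq_sub a b x
  set u := x 0 - conj (x 1) * x 2
  set v := x 1 - conj (x 0) * x 2
  set σ := 1 - ‖x 2‖ ^ 2
  set δ := ‖x 0‖ ^ 2 - ‖x 1‖ ^ 2
  have huv : ‖u‖ + ‖v‖ < σ := by linarith
  have hδ : δ * σ = ‖u‖ ^ 2 - ‖v‖ ^ 2 := (norm_sq_sub_norm_sq _ _ _).symm
  have hu := mul_le_mul_of_nonneg_left (norm_add_sq_mul_conj_sub_add_two_re_le a u
    (two_mul_le_add_of_mul_eq_sq_sub_sq (norm_nonneg u) (norm_nonneg v) huv hδ)) hb2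
  have hv := mul_le_mul_of_nonneg_left (norm_add_sq_mul_conj_sub_add_two_re_le b v (τ := σ - δ)
    (two_mul_le_add_of_mul_eq_sq_sub_sq (norm_nonneg v) (norm_nonneg u) (by linarith)
      (by linear_combination -hδ))) ha2
  have hmain := add_lt_of_mul_eq_sq_sub_sq (norm_nonneg a) ha (norm_nonneg b) hb
    (norm_nonneg u) (norm_nonneg v) huv hδ
  linarith

lemma den_ne_zero {a b : ℂ} (ha : ‖a‖ < 1) (hb : ‖b‖ < 1) {x : Fin 3 → ℂ} (hx : x ∈ TetE) :
    den a b x ≠ 0 := by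
  intro h0
  have h := tetE_inequality_num_den ha hb hx
  rw [h0, norm_zero, zero_pow two_ne_zero] at h
  exact h.not_ge (by positivity)

lemma mapsTo_tetraAut {a b : ℂ} (ha : ‖a‖ < 1) (hb : ‖b‖ < 1) : MapsTo (tetraAut a b) TetE TetE :=
  fun _ hx => by
    rw [tetraAut_eq, mem_tetE_div_iff (den_ne_zero ha hb hx)]
    exact tetE_inequality_num_den ha hb hx

lemma differentiableOn_tetraAut {a b : ℂ} (ha : ‖a‖ < 1) (hb : ‖b‖ < 1) :
    DifferentiableOn ℂ (tetraAut a b) TetE :=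
  fun _ hx => (differentiableAt_tetraAut (den_ne_zero ha hb hx)).differentiableWithinAt

lemma one_sub_mul_conj_ne_zero {z : ℂ} (hz : ‖z‖ ≠ 1) : 1 - z * conj z ≠ 0 := by
  rw [Complex.mul_conj', sub_ne_zero, ne_comm]
  exact_mod_cast (pow_eq_one_iff_of_nonneg (norm_nonneg z) two_ne_zero).not.2 hz

lemma tetraAut_neg_tetraAut {a b : ℂ} (ha : ‖a‖ ≠ 1) (hb : ‖b‖ ≠ 1) {x : Fin 3 → ℂ}
    (hx : den a b x ≠ 0) : tetraAut (-a) (-b) (tetraAut a b x) = x := by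
  set c := (1 - a * conj a) * (1 - b * conj b)
  have hc : c ≠ 0 := mul_ne_zero (one_sub_mul_conj_ne_zero ha) (one_sub_mul_conj_ne_zero hb)
  have e : den a b x + conj a * num₀ a b x + conj b * num₁ a b x + conj a * conj b * num₂ a b x =
      c := by
    simp only [c, den, num₀, num₁, num₂]; ring
  have e₀ : num₀ a b x + a * den a b x + conj b * num₂ a b x + a * conj b * num₁ a b x =
      c * x 0 := by
    simp only [c, den, num₀, num₁, num₂]; ring
  have e₁ : num₁ a b x + b * den a b x + conj a * num₂ a b x + conj a * b * num₀ a b x =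
      c * x 1 := by
    simp only [c, den, num₀, num₁, num₂]; ring
  have e₂ : num₂ a b x + a * num₁ a b x + b * num₀ a b x + a * b * den a b x =
      c * x 2 := by
    simp only [c, den, num₀, num₁, num₂]; ring
  rw [tetraAut_eq a b x]
  generalize den a b x = d at *
  generalize num₀ a b x = p at *
  generalize num₁ a b x = q at *
  generalize num₂ a b x = r at *
  have hden : den (-a) (-b) ![p / d, q / d, r / d] = c / d := by
    simp only [den, map_neg, Matrix.cons_val_zero, Matrix.cons_val_one, Matrix.cons_val, neg_mul,
      mul_neg, neg_neg, sub_neg_eq_add]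
    field_simp
    linear_combination e
  funext i
  fin_cases i <;>
    simp only [tetraAut_eq, hden, num₀, num₁, num₂, Fin.isValue, Fin.zero_eta, Fin.mk_one,
      Fin.reduceFinMk, Matrix.cons_val_zero, Matrix.cons_val_one, Matrix.cons_val, map_neg,
      neg_mul, mul_neg, neg_neg, sub_neg_eq_add] <;>
    field_simp
  · linear_combination e₀
  · linear_combination e₁
  · linear_combination e₂

end Tetrablock

theorem stmt14 (a b : ℂ) (ha : a ∈ 𝔻) (hb : b ∈ 𝔻) :
    IsAutomorphismOf TetE (tetraAut a b) := by
  have ha' : ‖a‖ < 1 := mem_ball_zero_iff.mp ha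
  have hb' : ‖b‖ < 1 := mem_ball_zero_iff.mp hb
  have hna : ‖-a‖ < 1 := by rwa [norm_neg]
  have hnb : ‖-b‖ < 1 := by rwa [norm_neg]
  refine ⟨Tetrablock.differentiableOn_tetraAut ha' hb', Tetrablock.mapsTo_tetraAut ha' hb',
    tetraAut (-a) (-b), Tetrablock.differentiableOn_tetraAut hna hnb,
    Tetrablock.mapsTo_tetraAut hna hnb, fun x hx => ?_, fun x hx => ?_⟩
  · exact Tetrablock.tetraAut_neg_tetraAut ha'.ne hb'.ne (Tetrablock.den_ne_zero ha' hb' hx)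
  · simpa using Tetrablock.tetraAut_neg_tetraAut hna.ne hnb.ne (Tetrablock.den_ne_zero hna hnb hx)

end
end

section
/- Let D be a bounded domain in ℂᴺ. Then the identity map id_D : D → D is m-extremal for every m ≥ 2: for any m distinct points λ₁,…,λ_m ∈ D, there is no open neighborhood U of the closure of D and holomorphic map h : U → D with h(λⱼ) = λⱼ for all j. In fact it suffices to prove the case m = 2: there is no holomorphic h on a neighborhood of D̄ with values in D fixing two distinct points of D. -/
open Complex Metric Set

noncomputable section

variable {E : Type*} [NormedAddCommGroup E] [NormedSpace ℂ E]

/-! Since `h` maps `D` into a compact subset of `D`, a slight dilation `p + c (h - p)`, `‖c‖ > 1`,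
still maps `D` into `D`. Cauchy estimates for its iterates at the fixed point `p` bound
`‖c ^ n h'(p) ^ n‖`, so `h'(p) ^ n → 0` and some iterate `g = h^[n₀]` contracts a ball `B(p, δ)`
into `B(p, δ / 2)`. The points of `D` whose `g`-orbit enters `B(p, δ)` form an open set, which is
also closed in `D` because the Schwarz lemma makes the iterates of `g` uniformly Lipschitz near
every point; by connectedness it is all of `D`. A second fixed point `q` thus lies in `B(p, δ)`,
where the contraction forces `q = p`. -/

open Function Filter Topology

theorem tendsto_norm_pow_nhds_zero_of_norm_smul_pow_le {𝕜 A : Type*} [NormedField 𝕜]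
    [NormedRing A] [NormedAlgebra 𝕜 A] {T : A} {c : 𝕜} (hc : 1 < ‖c‖) {C : ℝ}
    (hC : ∀ n : ℕ, ‖(c • T) ^ n‖ ≤ C) :
    Tendsto (fun n : ℕ => ‖T ^ n‖) atTop (𝓝 0) := by
  have hc₀ : 0 < ‖c‖ := one_pos.trans hc
  have hbound : ∀ n : ℕ, ‖T ^ n‖ ≤ C * ‖c‖⁻¹ ^ n := fun n => by
    have := hC n
    rw [smul_pow, norm_smul, norm_pow] at this
    rw [inv_pow, ← div_eq_mul_inv, le_div_iff₀ (pow_pos hc₀ n)]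
    linarith
  have hgeom : Tendsto (fun n : ℕ => C * ‖c‖⁻¹ ^ n) atTop (𝓝 0) := by
    simpa using (tendsto_pow_atTop_nhds_zero_of_lt_one (inv_nonneg.2 hc₀.le)
      (inv_lt_one_of_one_lt₀ hc)).const_mul C
  exact squeeze_zero (fun n => norm_nonneg _) hbound hgeom

theorem HasFDerivAt.eventually_norm_sub_le {𝕜 F G : Type*} [NontriviallyNormedField 𝕜]
    [NormedAddCommGroup F] [NormedSpace 𝕜 F] [NormedAddCommGroup G] [NormedSpace 𝕜 G]
    {φ : F → G} {T : F →L[𝕜] G} {p : F} {k : ℝ} (hφ : HasFDerivAt φ T p) (hk : ‖T‖ < k) :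
    ∀ᶠ z in 𝓝 p, ‖φ z - φ p‖ ≤ k * ‖z - p‖ := by
  filter_upwards [hφ.isLittleO.def (sub_pos.2 hk)] with z hz
  calc ‖φ z - φ p‖ = ‖(φ z - φ p - T (z - p)) + T (z - p)‖ := by rw [sub_add_cancel]
    _ ≤ (k - ‖T‖) * ‖z - p‖ + ‖T‖ * ‖z - p‖ := norm_add_le_of_le hz (T.le_opNorm _)
    _ = k * ‖z - p‖ := by ring

theorem exists_one_lt_mapsTo_dilation {D K : Set E} {h : E → E} (p : E) (hD : IsOpen D)
    (hK : IsCompact K) (hKD : K ⊆ D) (hhK : MapsTo h D K) :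
    ∃ c : ℂ, 1 < ‖c‖ ∧ MapsTo (fun z => c • (h z - p) + p) D D := by
  obtain ⟨ε, hε, hεD⟩ := hK.exists_thickening_subset_open hD hKD
  obtain ⟨R, hR, hKR⟩ := hK.isBounded.subset_closedBall_lt 0 p
  have ht : 0 < ε / (2 * R) := by positivity
  refine ⟨((1 + ε / (2 * R) : ℝ) : ℂ), ?_, fun z hz => hεD ?_⟩
  · rw [norm_real, Real.norm_of_nonneg (by positivity)]
    linarith
  refine mem_thickening_iff.2 ⟨h z, hhK hz, ?_⟩
  have hhz : ‖h z - p‖ ≤ R := mem_closedBall_iff_norm.1 (hKR (hhK hz))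
  calc dist (((1 + ε / (2 * R) : ℝ) : ℂ) • (h z - p) + p) (h z)
      = ε / (2 * R) * ‖h z - p‖ := by
        rw [dist_eq_norm, show ((1 + ε / (2 * R) : ℝ) : ℂ) • (h z - p) + p - h z
          = ((ε / (2 * R) : ℝ) : ℂ) • (h z - p) by push_cast; module, norm_smul, norm_real,
          Real.norm_of_nonneg ht.le]
    _ ≤ ε / (2 * R) * R := by gcongr
    _ < ε := by field_simp; linarith

theorem norm_pow_le_of_isFixedPt {D : Set E} {H : E → E} {T : E →L[ℂ] E} {p : E} {r R : ℝ}
    (hH : DifferentiableOn ℂ H D) (hHD : MapsTo H D D) (hp : IsFixedPt H p)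
    (hT : HasFDerivAt H T p) (hr : 0 < r) (hpr : ball p r ⊆ D) (hDR : D ⊆ closedBall p R)
    (n : ℕ) : ‖T ^ n‖ ≤ R / r := by
  rw [← (hT.iterate hp n).fderiv]
  refine norm_fderiv_le_div_of_mapsTo_ball ((hH.iterate hHD n).mono hpr) ?_ hr
  rw [(hp.iterate n).eq]
  exact ((hHD.iterate n).mono_left hpr).mono_right hDR

theorem tendsto_norm_pow_fderiv_of_isFixedPt {D K : Set E} {h : E → E} {p : E}
    (hDo : IsOpen D) (hDb : Bornology.IsBounded D) (hK : IsCompact K) (hKD : K ⊆ D)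
    (hhK : MapsTo h D K) (hh : DifferentiableOn ℂ h D) (hpD : p ∈ D) (hp : IsFixedPt h p) :
    Tendsto (fun n : ℕ => ‖fderiv ℂ h p ^ n‖) atTop (𝓝 0) := by
  obtain ⟨R, hDR⟩ := hDb.subset_closedBall p
  obtain ⟨r, hr, hpr⟩ := Metric.isOpen_iff.1 hDo p hpD
  obtain ⟨c, hc, hcD⟩ := exists_one_lt_mapsTo_dilation p hDo hK hKD hhK
  have hA := (hh.differentiableAt (hDo.mem_nhds hpD)).hasFDerivAt
  have hH : HasFDerivAt (fun z => c • (h z - p) + p) (c • fderiv ℂ h p) p := by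
    simpa using ((hA.sub_const p).const_smul c).add_const p
  refine tendsto_norm_pow_nhds_zero_of_norm_smul_pow_le hc
    (norm_pow_le_of_isFixedPt ?_ hcD ?_ hH hr hpr hDR)
  · exact ((hh.sub_const p).const_smul c).add_const p
  · simp [IsFixedPt, hp.eq]

theorem dist_iterate_le {D : Set E} {g : E → E} {p z w : E} {r R : ℝ}
    (hg : DifferentiableOn ℂ g D) (hgD : MapsTo g D D) (hDR : D ⊆ closedBall p R)
    (hzr : ball z r ⊆ D) (hw : w ∈ ball z r) (n : ℕ) :
    dist (g^[n] w) (g^[n] z) ≤ 2 * R / r * dist w z := by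
  have hz : z ∈ D := hzr (mem_ball_self (pos_of_mem_ball hw))
  refine dist_le_div_mul_dist_of_mapsTo_ball ((hg.iterate hgD n).mono hzr) (fun x hx => ?_) hw
  have hx' := hDR (hgD.iterate n (hzr hx))
  have hz' := hDR (hgD.iterate n hz)
  rw [mem_closedBall] at hx' hz' ⊢
  linarith [dist_triangle_right (g^[n] x) (g^[n] z) p]

theorem exists_iterate_mem_ball {D : Set E} {g : E → E} {p : E} {R δ δ' : ℝ}
    (hDo : IsOpen D) (hDc : IsPreconnected D) (hDR : D ⊆ closedBall p R)
    (hg : DifferentiableOn ℂ g D) (hgD : MapsTo g D D) (hpD : p ∈ D) (hδ : 0 < δ)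
    (hδ' : δ' < δ) (hgδ : MapsTo g (ball p δ) (closedBall p δ')) :
    ∀ z ∈ D, ∃ n, g^[n] z ∈ ball p δ := by
  set S := ⋃ n : ℕ, D ∩ g^[n] ⁻¹' ball p δ
  have hSo : IsOpen S := isOpen_iUnion fun n =>
    (hg.iterate hgD n).continuousOn.isOpen_inter_preimage hDo isOpen_ball
  suffices D ⊆ S from fun z hz => by
    obtain ⟨n, -, hn⟩ := mem_iUnion.1 (this hz)
    exact ⟨n, hn⟩
  refine hDc.subset_of_closure_inter_subset hSo
    ⟨p, hpD, mem_iUnion.2 ⟨0, hpD, mem_ball_self hδ⟩⟩ ?_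
  rintro z ⟨hzS, hzD⟩
  obtain ⟨r, hr, hzr⟩ := Metric.isOpen_iff.1 hDo z hzD
  have hclose : Tendsto (fun w => 2 * R / r * dist w z) (𝓝 z) (𝓝 0) := by
    simpa using
      ((continuous_id.dist (continuous_const (y := z))).tendsto z).const_mul (2 * R / r)
  obtain ⟨w, ⟨hwr, hwz⟩, hwS⟩ := mem_closure_iff_nhds.1 hzS _
    (inter_mem (ball_mem_nhds z hr) (hclose.eventually (gt_mem_nhds (sub_pos.2 hδ'))))
  obtain ⟨n, -, hn⟩ := mem_iUnion.1 hwS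
  replace hwz : 2 * R / r * dist w z < δ - δ' := hwz
  have hgn : dist (g^[n + 1] w) p ≤ δ' := by
    rw [iterate_succ_apply']
    exact hgδ hn
  have hzw := dist_iterate_le hg hgD hDR hzr hwr (n + 1)
  refine mem_iUnion.2 ⟨n + 1, hzD, mem_ball.2 ?_⟩
  linarith [dist_triangle (g^[n + 1] z) (g^[n + 1] w) p, dist_comm (g^[n + 1] z) (g^[n + 1] w)]

theorem eq_of_isFixedPt_of_mapsTo_isCompact {D K : Set E} {h : E → E} {p q : E}
    (hDo : IsOpen D) (hDc : IsPreconnected D) (hDb : Bornology.IsBounded D)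
    (hK : IsCompact K) (hKD : K ⊆ D) (hhK : MapsTo h D K) (hh : DifferentiableOn ℂ h D)
    (hpD : p ∈ D) (hqD : q ∈ D) (hp : IsFixedPt h p) (hq : IsFixedPt h q) : p = q := by
  obtain ⟨n₀, hn₀⟩ := ((tendsto_norm_pow_fderiv_of_isFixedPt hDo hDb hK hKD hhK hh hpD hp
    ).eventually (gt_mem_nhds one_half_pos)).exists
  have hA := (hh.differentiableAt (hDo.mem_nhds hpD)).hasFDerivAt
  obtain ⟨δ, hδ, hcontr⟩ := Metric.eventually_nhds_iff_ball.1
    ((hA.iterate hp.eq n₀).eventually_norm_sub_le hn₀)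
  set g := h^[n₀]
  have hgp : g p = p := (hp.iterate n₀).eq
  have hgq : IsFixedPt g q := hq.iterate n₀
  obtain ⟨R, hDR⟩ := hDb.subset_closedBall p
  have hgδ : MapsTo g (ball p δ) (closedBall p (δ / 2)) := fun z hz => by
    have hgz := hcontr z hz
    rw [hgp, ← dist_eq_norm, ← dist_eq_norm] at hgz
    rw [mem_closedBall]
    linarith [mem_ball.1 hz]
  have hhD : MapsTo h D D := hhK.mono_right hKD
  obtain ⟨n, hn⟩ := exists_iterate_mem_ball hDo hDc hDR (hh.iterate hhD n₀) (hhD.iterate n₀) hpD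
    hδ (half_lt_self hδ) hgδ q hqD
  rw [(hgq.iterate n).eq] at hn
  have hqp := hcontr q hn
  rw [hgp, hgq.eq] at hqp
  have hqp' : ‖q - p‖ = 0 := by linarith [norm_nonneg (q - p)]
  exact (sub_eq_zero.1 (norm_eq_zero.1 hqp')).symm

theorem stmt19 {N : ℕ} (D : Set (Fin N → ℂ)) (hDo : IsOpen D) (hDc : IsConnected D)
    (hbd : Bornology.IsBounded D)
    (m : ℕ) (hm : 2 ≤ m) (lam : Fin m → Fin N → ℂ)
    (hinj : Function.Injective lam) (hmem : ∀ j, lam j ∈ D) :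
    ¬ ∃ (U : Set (Fin N → ℂ)) (h : (Fin N → ℂ) → (Fin N → ℂ)),
        IsOpen U ∧ closure D ⊆ U ∧ DifferentiableOn ℂ h U ∧ (∀ z ∈ U, h z ∈ D) ∧
        ∀ j, h (lam j) = lam j := by
  rintro ⟨U, h, -, hDU, hh, hhD, hfix⟩
  have hK : IsCompact (h '' closure D) :=
    hbd.isCompact_closure.image_of_continuousOn (hh.continuousOn.mono hDU)
  have hKD : h '' closure D ⊆ D := image_subset_iff.2 fun z hz => hhD z (hDU hz)
  have h01 : (⟨0, by omega⟩ : Fin m) ≠ ⟨1, by omega⟩ := by simp [Fin.ext_iff]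
  exact h01 <| hinj <| eq_of_isFixedPt_of_mapsTo_isCompact hDo hDc.isPreconnected hbd hK hKD
    (fun z hz => mem_image_of_mem h (subset_closure hz)) (hh.mono (subset_closure.trans hDU))
    (hmem _) (hmem _) (hfix _) (hfix _)

end
end
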